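/- Let f be a maximum flow with limit x from s to t in a graph G with capacities c, where x ≥ inflow excess at s. If after pushing f the node s still has positive remaining excess (i.e., the value of f is strictly less than x), then f is a maximum s-to-t flow, and hence there is no residual s-to-t path in G_f. -/

import Mathlib

/-- A directed graph given by darts: each dart has a tail, a head, and a reverse dart. -/
structure Dgraph (V D : Type) where
  tail : D → V
  head : D → V
  rev : D → D
  rev_rev : ∀ d, rev (rev d) = d
  tail_rev : ∀ d, tail (rev d) = head d
  head_rev : ∀ d, head (rev d) = tail d

namespace Dgraph

variable {V D : Type}

/-- an antisymmetric flow assignment -/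
def Antisym (G : Dgraph V D) (f : D → ℝ) : Prop :=
  ∀ d, f (G.rev d) = - f d

/-- net inflow of a flow assignment at a node -/
noncomputable def inflow [Fintype D] [DecidableEq V] (G : Dgraph V D) (f : D → ℝ) (v : V) : ℝ :=
  ∑ d ∈ Finset.univ.filter (fun d => G.head d = v), f d

/-- one step along a dart of strictly positive capacity -/
def ResStep (G : Dgraph V D) (cap : D → ℝ) (u v : V) : Prop :=
  ∃ d, G.tail d = u ∧ G.head d = v ∧ 0 < cap d

/-- existence of a path all of whose darts have strictly positive capacity -/
def ResReach (G : Dgraph V D) (cap : D → ℝ) (u v : V) : Prop :=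
  Relation.ReflTransGen (G.ResStep cap) u v

/-- a pseudoflow: antisymmetric and respecting all capacities -/
def Pseudoflow (G : Dgraph V D) (c f : D → ℝ) : Prop :=
  G.Antisym f ∧ ∀ d, f d ≤ c d

end Dgraph

namespace Dgraph

/-- `g` is a maximum feasible flow from `a` to `b` with limit `x` (w.r.t. capacities `cap`):
it is a feasible `a`-`b` flow of value at most `x`, of greatest value among such flows. -/
def MaxLimFlow {V D : Type} [Fintype D] [DecidableEq V]
    (G : Dgraph V D) (cap : D → ℝ) (a b : V) (x : ℝ) (g : D → ℝ) : Prop :=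
  G.Antisym g ∧ (∀ d, g d ≤ cap d) ∧
  (∀ v, v ≠ a → v ≠ b → G.inflow g v = 0) ∧
  G.inflow g b ≤ x ∧
  ∀ g' : D → ℝ, G.Antisym g' → (∀ d, g' d ≤ cap d) →
    (∀ v, v ≠ a → v ≠ b → G.inflow g' v = 0) →
    G.inflow g' b ≤ x → G.inflow g' b ≤ G.inflow g b

end Dgraph

/-!
A maximum flow `f` with limit `x` whose value is below `x` is an unrestricted maximum flow:
feasible flows form a convex set and the value is affine in the flow, so a flow `g` of larger
value could be blended with `f` into a feasible flow of value exactly `x`, beating `f`.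
A residual `s`-`t` path in turn yields an antisymmetric unit `s`-`t` flow supported on darts of
positive residual capacity; a small positive multiple of it augments `f`, so a maximum flow
admits no such path.
-/

lemma exists_pos_forall_mul_le {ι : Type*} [Finite ι] (g r : ι → ℝ) (hr : 0 ≤ r)
    (hgr : ∀ i, 0 < g i → 0 < r i) : ∃ ε > 0, ∀ i, ε * g i ≤ r i := by
  have hev : ∀ i, ∀ᶠ ε in nhdsWithin (0 : ℝ) (Set.Ioi 0), ε * g i ≤ r i := by
    intro i
    rcases le_or_gt (g i) 0 with hg | hg
    · filter_upwards [self_mem_nhdsWithin] with ε hε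
      exact (mul_nonpos_of_nonneg_of_nonpos (le_of_lt hε) hg).trans (hr i)
    · have hlim : Filter.Tendsto (fun ε : ℝ => ε * g i) (nhds 0) (nhds 0) :=
        (continuous_mul_const (g i)).tendsto' 0 0 (zero_mul _)
      exact nhdsWithin_le_nhds ((hlim.eventually (gt_mem_nhds (hgr i hg))).mono fun _ => le_of_lt)
  obtain ⟨ε, hεle, hε⟩ := ((Filter.eventually_all.2 hev).and self_mem_nhdsWithin).exists
  exact ⟨ε, hε, hεle⟩

namespace Dgraph

variable {V D : Type}

section Antisym

variable {G : Dgraph V D} {f g : D → ℝ}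

lemma Antisym.add (hf : G.Antisym f) (hg : G.Antisym g) : G.Antisym (f + g) := fun d => by
  simp only [Pi.add_apply, hf d, hg d, neg_add]

lemma Antisym.smul (hf : G.Antisym f) (a : ℝ) : G.Antisym (a • f) := fun d => by
  simp only [Pi.smul_apply, smul_eq_mul, hf d, mul_neg]

end Antisym

section DartFlow

variable (G : Dgraph V D) [DecidableEq D]

def dartFlow (d : D) : D → ℝ := Pi.single d 1 - Pi.single (G.rev d) 1

lemma antisym_dartFlow (d : D) : G.Antisym (G.dartFlow d) := fun e => by
  have hrev : Function.Involutive G.rev := G.rev_rev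
  simp only [dartFlow, Pi.sub_apply, Pi.single_apply, hrev.eq_iff, G.rev_rev]
  split_ifs <;> norm_num

end DartFlow

section Inflow

variable [Fintype D] [DecidableEq V] (G : Dgraph V D)

lemma inflow_add (f g : D → ℝ) (v : V) : G.inflow (f + g) v = G.inflow f v + G.inflow g v :=
  Finset.sum_add_distrib

lemma inflow_sub (f g : D → ℝ) (v : V) : G.inflow (f - g) v = G.inflow f v - G.inflow g v :=
  Finset.sum_sub_distrib ..

lemma inflow_smul (a : ℝ) (f : D → ℝ) (v : V) : G.inflow (a • f) v = a * G.inflow f v := by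
  simp only [inflow, Pi.smul_apply, smul_eq_mul, Finset.mul_sum]

lemma inflow_single [DecidableEq D] (d : D) (a : ℝ) :
    G.inflow (Pi.single d a) = Pi.single (G.head d) a := by
  funext v
  rw [inflow, Finset.sum_pi_single', Pi.single_apply]
  simp only [Finset.mem_filter, Finset.mem_univ, true_and, eq_comm]

variable [DecidableEq D]

lemma inflow_dartFlow (d : D) :
    G.inflow (G.dartFlow d) = Pi.single (G.head d) 1 - Pi.single (G.tail d) 1 := by
  funext v
  rw [dartFlow, inflow_sub, inflow_single, inflow_single, head_rev, Pi.sub_apply]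

lemma exists_pathFlow_of_resReach {r : D → ℝ} {u v : V} (h : G.ResReach r u v) :
    ∃ g : D → ℝ, G.Antisym g ∧ G.inflow g = Pi.single v 1 - Pi.single u 1 ∧
      ∀ d, 0 < g d → 0 < r d := by
  induction h with
  | refl => exact ⟨0, fun _ => by simp, by funext; simp [inflow], by simp⟩
  | tail _ hstep ih =>
    obtain ⟨g, hga, hgin, hgr⟩ := ih
    obtain ⟨d, rfl, rfl, hd⟩ := hstep
    refine ⟨g + G.dartFlow d, hga.add (G.antisym_dartFlow d), ?_, fun e he => ?_⟩
    · funext w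
      simp only [inflow_add, hgin, inflow_dartFlow, Pi.sub_apply]
      ring
    · by_cases hed : e = d
      · exact hed ▸ hd
      · have hle : G.dartFlow d e ≤ 0 := by
          simp only [dartFlow, Pi.sub_apply, Pi.single_apply, hed, if_false]
          split_ifs <;> norm_num
        exact hgr e (by simp only [Pi.add_apply] at he; linarith)

end Inflow

section Flow

variable [Fintype D] [DecidableEq V] {G : Dgraph V D} {c f : D → ℝ} {s t : V}

variable (G) in
def IsFlow (c : D → ℝ) (s t : V) (f : D → ℝ) : Prop :=
  G.Pseudoflow c f ∧ ∀ v, v ≠ s → v ≠ t → G.inflow f v = 0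

variable (G) in
def IsMaxFlow (c : D → ℝ) (s t : V) (f : D → ℝ) : Prop :=
  G.IsFlow c s t f ∧ ∀ g, G.IsFlow c s t g → G.inflow g t ≤ G.inflow f t

lemma convex_setOf_isFlow : Convex ℝ {f | G.IsFlow c s t f} := by
  rintro f ⟨⟨hfa, hfc⟩, hfv⟩ g ⟨⟨hga, hgc⟩, hgv⟩ a b ha hb hab
  refine ⟨⟨(hfa.smul a).add (hga.smul b), fun d => ?_⟩, fun v hs ht => ?_⟩
  · calc a * f d + b * g d ≤ a * c d + b * c d := by gcongr; exacts [hfc d, hgc d]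
      _ = c d := by rw [← add_mul, hab, one_mul]
  · rw [inflow_add, inflow_smul, inflow_smul, hfv v hs ht, hgv v hs ht]
    ring

lemma MaxLimFlow.isMaxFlow {x : ℝ} (hf : G.MaxLimFlow c s t x f) (hlt : G.inflow f t < x) :
    G.IsMaxFlow c s t f := by
  obtain ⟨hfa, hfc, hfv, -, hmax⟩ := hf
  have hflow : G.IsFlow c s t f := ⟨⟨hfa, hfc⟩, hfv⟩
  refine ⟨hflow, fun g hg => ?_⟩
  by_contra! hgt
  have hxg : x < G.inflow g t := by
    by_contra! hgx
    exact hgt.not_ge (hmax g hg.1.1 hg.1.2 hg.2 hgx)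
  -- the blend `(1 - a) • f + a • g` has value exactly `x`
  set a := (x - G.inflow f t) / (G.inflow g t - G.inflow f t)
  have ha_mul : a * (G.inflow g t - G.inflow f t) = x - G.inflow f t :=
    div_mul_cancel₀ _ (by linarith)
  have ha0 : 0 ≤ a := div_nonneg (by linarith) (by linarith)
  have ha1 : a ≤ 1 := (div_le_one (by linarith)).2 (by linarith)
  obtain ⟨⟨hba, hbc⟩, hbv⟩ : G.IsFlow c s t ((1 - a) • f + a • g) :=
    convex_setOf_isFlow hflow hg (by linarith) ha0 (by ring)
  have hval : G.inflow ((1 - a) • f + a • g) t = x := by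
    rw [inflow_add, inflow_smul, inflow_smul]
    linear_combination ha_mul
  have := hmax _ hba hbc hbv hval.le
  linarith

lemma IsFlow.exists_inflow_gt_of_resReach (hf : G.IsFlow c s t f) (hst : s ≠ t)
    (h : G.ResReach (fun d => c d - f d) s t) :
    ∃ g, G.IsFlow c s t g ∧ G.inflow f t < G.inflow g t := by
  classical
  obtain ⟨⟨hfa, hfc⟩, hfv⟩ := hf
  obtain ⟨p, hpa, hpin, hpr⟩ := G.exists_pathFlow_of_resReach h
  obtain ⟨ε, hε, hεp⟩ :=
    exists_pos_forall_mul_le p (fun d => c d - f d) (fun d => sub_nonneg.2 (hfc d)) hpr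
  refine ⟨f + ε • p, ⟨⟨hfa.add (hpa.smul ε), fun d => ?_⟩, fun v hs ht => ?_⟩, ?_⟩
  · have := hεp d
    simp only [Pi.add_apply, Pi.smul_apply, smul_eq_mul]
    linarith
  · simp [inflow_add, inflow_smul, hpin, hfv v hs ht, hs, ht]
  · simp [inflow_add, inflow_smul, hpin, hst.symm, hε]

lemma IsMaxFlow.not_resReach (hf : G.IsMaxFlow c s t f) (hst : s ≠ t) :
    ¬ G.ResReach (fun d => c d - f d) s t := fun h =>
  let ⟨g, hg, hlt⟩ := hf.1.exists_inflow_gt_of_resReach hst h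
  (hf.2 g hg).not_gt hlt

end Flow

end Dgraph

/-- if a maximum flow with limit `x` has value strictly less than `x`,
it is a maximum `s`-`t` flow, so there is no residual `s`-to-`t` path. -/
theorem stmt15 {V D : Type} [Fintype D] [DecidableEq V]
    (G : Dgraph V D) (c : D → ℝ) (s t : V) (hst : s ≠ t) (x : ℝ)
    (f : D → ℝ) (hf : G.MaxLimFlow c s t x f)
    (hless : G.inflow f t < x) :
    (∀ f' : D → ℝ, G.Antisym f' → (∀ d, f' d ≤ c d) →
      (∀ v, v ≠ s → v ≠ t → G.inflow f' v = 0) →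
      G.inflow f' t ≤ G.inflow f t) ∧
    ¬ G.ResReach (fun d => c d - f d) s t := by
  have hmax := hf.isMaxFlow hless
  exact ⟨fun f' ha hc hv => hmax.2 f' ⟨⟨ha, hc⟩, hv⟩, hmax.not_resReach hst⟩
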